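/- Let h be a real form of degree d in n variables that is indefinite (it attains both positive and negative values on ℝⁿ) and irreducible in the polynomial ring ℝ[x₁,…,xₙ]. If h² = Σ_{j=1}^m h_j² where each h_j is a real form of degree d, then there exist real numbers λ₁,…,λ_m with Σ_{j=1}^m λ_j² = 1 such that h_j = λ_j·h for every j. -/

import Mathlib

/-!
Every `f j` vanishes on the zero set of `h`. Put `v = b - a`; near `a`, every line in direction
`v` meets the zero set of `h`. Regard `H(t) = h(x + t v)` and `F(t) = f j (x + t v)` as polynomials
in `t` over `ℝ[x]`. Substituting `x ↦ x + t v` is an automorphism of `ℝ[x][t]`, so `H` is prime.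
If `h ∤ f j`, Gauss's lemma makes `H` and `F` coprime over `Frac ℝ[x]`. Then their resultant is a
nonzero polynomial in `x` in the ideal `(H, F)`, so it vanishes on an open set, which is
impossible. Hence `h ∣ f j`. Homogeneity of degree `d` then forces `f j = λ_j • h`, and
`h ^ 2 = (∑ λ_j ^ 2) • h ^ 2`.
-/

open MvPolynomial
open scoped Polynomial

theorem Polynomial.exists_mul_add_mul_eq_C_of_not_dvd {R : Type*} [CommRing R] [IsDomain R]
    [IsGCDMonoid R] {H F : R[X]} (hH : Irreducible H) (hdeg : H.natDegree ≠ 0) (hHF : ¬H ∣ F) :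
    ∃ r ≠ 0, ∃ A B : R[X], H * A + F * B = Polynomial.C r := by
  let φ := algebraMap R (FractionRing R)
  have hprim : H.IsPrimitive := hH.isPrimitive hdeg
  have hcop : IsCoprime (H.map φ) (F.map φ) :=
    ((hprim.irreducible_iff_irreducible_map_fraction_map).mp hH).coprime_iff_not_dvd.mpr
      fun hd => hHF (hprim.dvd_of_fraction_map_dvd_fraction_map hd)
  obtain ⟨A, B, -, -, hAB⟩ := exists_mul_add_mul_eq_C_resultant H F le_rfl le_rfl (Or.inl hdeg)
  refine ⟨resultant H F, fun h0 => resultant_ne_zero _ _ hcop ?_, A, B, hAB⟩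
  have hinj : Function.Injective φ := IsFractionRing.injective R _
  rw [natDegree_map_eq_of_injective hinj, natDegree_map_eq_of_injective hinj, resultant_map_map,
    h0, map_zero]

namespace MvPolynomial

section LineShift

variable {σ R : Type*} [CommRing R]

/-- `p (x + t • v)`, as a polynomial in `t` with coefficients in `MvPolynomial σ R`. -/
noncomputable def lineShift (v : σ → R) : MvPolynomial σ R →ₐ[R] (MvPolynomial σ R)[X] :=
  aeval fun i => Polynomial.C (X i) + Polynomial.C (C (v i)) * Polynomial.X

@[simp]
theorem lineShift_X (v : σ → R) (i : σ) :
    lineShift v (X i) = Polynomial.C (X i) + Polynomial.C (C (v i)) * Polynomial.X :=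
  aeval_X _ _

@[simp]
theorem lineShift_C (v : σ → R) (r : R) : lineShift v (C r) = Polynomial.C (C r) :=
  (lineShift v).commutes r

theorem eval₂_lineShift (v x : σ → R) (t : R) (p : MvPolynomial σ R) :
    (lineShift v p).eval₂ (eval x) t = eval (x + t • v) p := by
  induction p using MvPolynomial.induction_on with
  | C r => simp
  | add p q hp hq => simp [hp, hq]
  | mul_X p i hp => simp [hp, mul_comm t]

@[simp]
theorem eval_lineShift_zero (v : σ → R) (p : MvPolynomial σ R) : (lineShift v p).eval 0 = p := by
  induction p using MvPolynomial.induction_on with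
  | C r => simp
  | add p q hp hq => simp [hp, hq]
  | mul_X p i hp => simp [hp]

theorem natDegree_lineShift_ne_zero {v x : σ → R} {p : MvPolynomial σ R}
    (hp : eval x p ≠ eval (x + v) p) : (lineShift v p).natDegree ≠ 0 := by
  rw [Ne, Polynomial.natDegree_eq_zero]
  rintro ⟨c, hc⟩
  have h0 := eval₂_lineShift v x 0 p
  have h1 := eval₂_lineShift v x 1 p
  rw [← hc, Polynomial.eval₂_C] at h0 h1
  exact hp (by simpa using h0.symm.trans h1)

noncomputable def lineShiftPoly (v : σ → R) : (MvPolynomial σ R)[X] →+* (MvPolynomial σ R)[X] :=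
  Polynomial.eval₂RingHom (lineShift v : MvPolynomial σ R →+* (MvPolynomial σ R)[X]) Polynomial.X

theorem lineShiftPoly_comp (v w : σ → R) :
    (lineShiftPoly v).comp (lineShiftPoly w) = lineShiftPoly (v + w) := by
  refine Polynomial.ringHom_ext' (MvPolynomial.ringHom_ext (fun r => ?_) fun i => ?_) ?_ <;>
    simp [lineShiftPoly]
  ring

theorem lineShiftPoly_zero : lineShiftPoly (0 : σ → R) = RingHom.id _ := by
  refine Polynomial.ringHom_ext' (MvPolynomial.ringHom_ext (fun r => ?_) fun i => ?_) ?_ <;>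
    simp [lineShiftPoly]

noncomputable def lineShiftEquiv (v : σ → R) : (MvPolynomial σ R)[X] ≃+* (MvPolynomial σ R)[X] :=
  .ofRingHom (lineShiftPoly v) (lineShiftPoly (-v))
    (by rw [lineShiftPoly_comp, add_neg_cancel, lineShiftPoly_zero])
    (by rw [lineShiftPoly_comp, neg_add_cancel, lineShiftPoly_zero])

theorem prime_lineShift [IsDomain R] (v : σ → R) {p : MvPolynomial σ R} (hp : Prime p) :
    Prime (lineShift v p) := by
  have : lineShiftEquiv v (Polynomial.C p) = lineShift v p := Polynomial.eval₂_C _ _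
  rw [← this]
  exact (MulEquiv.prime_iff (lineShiftEquiv v).toMulEquiv).mpr (Polynomial.prime_C_iff.mpr hp)

end LineShift

theorem eq_zero_of_isOpen_of_eval_eq_zero {σ K : Type*} [Finite σ] [NontriviallyNormedField K]
    {p : MvPolynomial σ K} {U : Set (σ → K)} (hU : IsOpen U) (hne : U.Nonempty)
    (hp : ∀ x ∈ U, eval x p = 0) : p = 0 := by
  obtain ⟨a, ha⟩ := hne
  obtain ⟨u, hu, hsub⟩ := isOpen_pi_iff'.mp hU a ha
  exact funext_set u (fun i => infinite_of_mem_nhds (a i) ((hu i).1.mem_nhds (hu i).2))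
    fun x hx => by rw [hp x (hsub hx), map_zero]

theorem dvd_of_eval_eq_zero_of_sign_change {σ : Type*} [Finite σ] {h f : MvPolynomial σ ℝ}
    (hh : Irreducible h) {a b : σ → ℝ} (ha : 0 < eval a h) (hb : eval b h < 0)
    (hf : ∀ x, eval x h = 0 → eval x f = 0) : h ∣ f := by
  set v := b - a
  set U := {x | 0 < eval x h ∧ eval (x + v) h < 0}
  have hU : IsOpen U := (isOpen_lt continuous_const (continuous_eval h)).inter
    (isOpen_lt ((continuous_eval h).comp (continuous_id.add continuous_const)) continuous_const)
  have haU : a ∈ U := ⟨ha, by simpa [v] using hb⟩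
  have hroot : ∀ x ∈ U, ∃ t : ℝ, eval (x + t • v) h = 0 := by
    rintro x ⟨hpos, hneg⟩
    have hcont : Continuous fun t : ℝ => eval (x + t • v) h :=
      (continuous_eval h).comp (continuous_const.add (continuous_id.smul continuous_const))
    obtain ⟨t, -, ht⟩ := intermediate_value_Icc' zero_le_one hcont.continuousOn
      ⟨by simpa using hneg.le, by simpa using hpos.le⟩
    exact ⟨t, ht⟩
  have hdeg : (lineShift v h).natDegree ≠ 0 :=
    natDegree_lineShift_ne_zero (x := a) (haU.2.trans haU.1).ne'
  by_contra hdvd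
  obtain ⟨r, hr0, A, B, hAB⟩ := Polynomial.exists_mul_add_mul_eq_C_of_not_dvd
    (F := lineShift v f) (prime_lineShift v hh.prime).irreducible hdeg
    fun hd => hdvd (by simpa using map_dvd (Polynomial.evalRingHom 0) hd)
  refine hr0 (eq_zero_of_isOpen_of_eval_eq_zero hU ⟨a, haU⟩ fun x hx => ?_)
  obtain ⟨t, ht⟩ := hroot x hx
  have := congrArg (Polynomial.eval₂ (eval x) t) hAB
  simpa [Polynomial.eval₂_mul, eval₂_lineShift, ht, hf _ ht] using this.symm

theorem IsHomogeneous.exists_eq_smul_of_dvd {σ R : Type*} [CommRing R] [IsDomain R]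
    {p q : MvPolynomial σ R} {d : ℕ} (hp : p.IsHomogeneous d) (hq : q.IsHomogeneous d)
    (hp0 : p ≠ 0) (hpq : p ∣ q) : ∃ c : R, q = c • p := by
  obtain ⟨r, rfl⟩ := hpq
  obtain rfl | hr0 := eq_or_ne r 0
  · exact ⟨0, by simp⟩
  have hdeg : r.totalDegree = 0 := by
    have := hq.totalDegree (mul_ne_zero hp0 hr0)
    rw [totalDegree_mul_of_isDomain hp0 hr0, hp.totalDegree hp0] at this
    omega
  refine ⟨coeff 0 r, ?_⟩
  rw [smul_eq_C_mul, mul_comm, ← totalDegree_eq_zero_iff_eq_C.mp hdeg]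

theorem eval_eq_zero_of_sq_eq_sum_sq {σ ι R : Type*} [Fintype ι] [CommRing R] [LinearOrder R]
    [IsStrictOrderedRing R] {h : MvPolynomial σ R} {f : ι → MvPolynomial σ R}
    (heq : h ^ 2 = ∑ j, f j ^ 2) {x : σ → R} (hx : eval x h = 0) (j : ι) : eval x (f j) = 0 := by
  have hsum : ∑ j, eval x (f j) ^ 2 = 0 := by simpa [hx] using (congrArg (eval x) heq).symm
  exact pow_eq_zero_iff two_ne_zero |>.mp <|
    (Finset.sum_eq_zero_iff_of_nonneg fun j _ => sq_nonneg _).mp hsum j (Finset.mem_univ j)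

end MvPolynomial

theorem sq_of_indefinite_irreducible_sos (n d m : ℕ)
    (h : MvPolynomial (Fin n) ℝ) (hhom : h.IsHomogeneous d)
    (hindef : ∃ a b : Fin n → ℝ, 0 < eval a h ∧ eval b h < 0)
    (hirr : Irreducible h)
    (f : Fin m → MvPolynomial (Fin n) ℝ)
    (hf : ∀ j, (f j).IsHomogeneous d)
    (heq : h ^ 2 = ∑ j, (f j) ^ 2) :
    ∃ lam : Fin m → ℝ, (∑ j, (lam j) ^ 2 = 1) ∧ ∀ j, f j = lam j • h := by
  obtain ⟨a, b, ha, hb⟩ := hindef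
  have hh0 : h ≠ 0 := by rintro rfl; simp at ha
  have hdvd : ∀ j, h ∣ f j := fun j =>
    dvd_of_eval_eq_zero_of_sign_change hirr ha hb fun x hx => eval_eq_zero_of_sq_eq_sum_sq heq hx j
  choose lam hlam using fun j => hhom.exists_eq_smul_of_dvd (hf j) hh0 (hdvd j)
  refine ⟨lam, smul_left_injective ℝ (pow_ne_zero 2 hh0) ?_, hlam⟩
  show (∑ j, lam j ^ 2) • h ^ 2 = (1 : ℝ) • h ^ 2
  rw [one_smul, Finset.sum_smul]
  conv_rhs => rw [heq]
  simp only [hlam, smul_pow]
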